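/- For all integers m ≥ 1 and s ≥ m, the quantity N_s^{(m)} = Σ (2u+1) · t_u · t_{v₁}⋯t_{v_{2m−1}}, where the sum is over all tuples (u, v₁, …, v_{2m−1}) of nonnegative integers with u + v₁ + ⋯ + v_{2m−1} = s − m, satisfies N_s^{(m)} ≤ 2^m · s · t_s. (N_s^{(m)} is the total number, over all plane rooted trees with s edges, of ways to mark m distinct edges from the same exit cluster.) -/

import Mathlib

/-- `t_k = (2k)!/(k!(k+1)!)`, the `k`-th Catalan number, as a real number. -/
noncomputable def tReal (k : ℕ) : ℝ :=
  (Nat.factorial (2 * k) : ℝ) / ((Nat.factorial k : ℝ) * (Nat.factorial (k + 1) : ℝ))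

/-!
With `C = Σ tₙ xⁿ` and `A = Σ (2n+1) tₙ xⁿ`, the sum is the coefficient of `x^(s-m)` in
`A C^(2m-1)`. From `C = 1 + x C²` and `(n+2) tₙ₊₁ = 2 (2n+1) tₙ` one gets `A C + C² = 2 A`,
hence `A Cʳ = x A C^(r+2) + C^(r+2)`. As all coefficients are nonnegative (the series live
over `ℕ`), `[xⁿ] A C^(r+2) ≤ [x^(n+1)] A Cʳ`; applying this `m - 1` times ends at
`[x^(s-1)] A C = s tₛ`, so the sum is in fact at most `s tₛ`.
-/

open Finset PowerSeries

theorem PowerSeries.coeff_pow_eq_sum_antidiagonalTuple {R : Type*} [CommSemiring R]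
    (φ : R⟦X⟧) (k n : ℕ) :
    coeff n (φ ^ k) = ∑ l ∈ Nat.antidiagonalTuple k n, ∏ i, coeff (l i) φ := by
  rw [← Fin.prod_const, coeff_prod]
  refine sum_nbij' (⇑) Finsupp.equivFunOnFinite.symm ?_ ?_ ?_ ?_ ?_ <;>
    simp [Nat.mem_antidiagonalTuple, mem_finsuppAntidiag]

theorem tReal_eq_catalan (k : ℕ) : tReal k = catalan k := by
  have hchoose := Nat.cast_choose ℝ (show k ≤ 2 * k by omega)
  rw [show 2 * k - k = k by omega] at hchoose
  have hcat : ((k + 1 : ℕ) : ℝ) * catalan k = (2 * k).choose k := by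
    exact_mod_cast succ_mul_catalan_eq_centralBinom k
  rw [hchoose] at hcat
  rw [tReal, Nat.factorial_succ]
  field_simp at hcat ⊢
  push_cast at hcat ⊢
  linear_combination -hcat

theorem succ_succ_mul_catalan_succ (n : ℕ) :
    (n + 2) * catalan (n + 1) = 2 * (2 * n + 1) * catalan n := by
  have h := Nat.succ_mul_centralBinom_succ n
  rw [← succ_mul_catalan_eq_centralBinom, ← succ_mul_catalan_eq_centralBinom] at h
  have : (n + 1) * ((n + 2) * catalan (n + 1)) = (n + 1) * (2 * (2 * n + 1) * catalan n) := by
    linarith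
  exact Nat.eq_of_mul_eq_mul_left n.succ_pos this

theorem sum_antidiagonal_odd_mul_catalan_mul_catalan (n : ℕ) :
    ∑ p ∈ antidiagonal n, (2 * p.1 + 1) * catalan p.1 * catalan p.2 =
      (n + 1) * catalan (n + 1) := by
  have hswap := Nat.sum_antidiagonal_swap (n := n)
    (f := fun p => (2 * p.1 + 1) * catalan p.1 * catalan p.2)
  suffices 2 * ∑ p ∈ antidiagonal n, (2 * p.1 + 1) * catalan p.1 * catalan p.2 =
      2 * ((n + 1) * catalan (n + 1)) by omega
  calc 2 * ∑ p ∈ antidiagonal n, (2 * p.1 + 1) * catalan p.1 * catalan p.2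
      = ∑ p ∈ antidiagonal n, ((2 * p.1 + 1) * catalan p.1 * catalan p.2
          + (2 * p.2 + 1) * catalan p.2 * catalan p.1) := by
        rw [sum_add_distrib, two_mul]; congr 1; exact hswap.symm
    _ = ∑ p ∈ antidiagonal n, 2 * (n + 1) * (catalan p.1 * catalan p.2) := by
        refine sum_congr rfl fun p hp => ?_
        rw [← mem_antidiagonal.mp hp]; ring
    _ = 2 * ((n + 1) * catalan (n + 1)) := by
        rw [← mul_sum, catalan_succ']; ring

namespace PowerSeries

theorem coeff_catalanSeries_sq (n : ℕ) : coeff n (catalanSeries ^ 2) = catalan (n + 1) := by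
  simpa [coeff_succ_mul_X] using congrArg (coeff (n + 1)) catalanSeries_sq_mul_X_add_one

noncomputable def weightedCatalanSeries : ℕ⟦X⟧ := mk fun n => (2 * n + 1) * catalan n

theorem coeff_weightedCatalanSeries_mul_catalanSeries (n : ℕ) :
    coeff n (weightedCatalanSeries * catalanSeries) = (n + 1) * catalan (n + 1) := by
  simp [coeff_mul, weightedCatalanSeries, sum_antidiagonal_odd_mul_catalan_mul_catalan]

theorem weightedCatalanSeries_mul_catalanSeries_add_sq :
    weightedCatalanSeries * catalanSeries + catalanSeries ^ 2 = 2 * weightedCatalanSeries := by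
  ext n
  rw [map_add, coeff_weightedCatalanSeries_mul_catalanSeries, coeff_catalanSeries_sq, two_mul,
    map_add, weightedCatalanSeries, coeff_mk]
  linarith [succ_succ_mul_catalan_succ n]

theorem weightedCatalanSeries_mul_catalanSeries_pow (r : ℕ) :
    weightedCatalanSeries * catalanSeries ^ r =
      X * (weightedCatalanSeries * catalanSeries ^ (r + 2)) + catalanSeries ^ (r + 2) := by
  have hC := catalanSeries_sq_mul_X_add_one
  have hA := weightedCatalanSeries_mul_catalanSeries_add_sq
  set A := weightedCatalanSeries
  set C := catalanSeries
  have hC' : A * C ^ r * C = X * (A * C ^ (r + 2)) + A * C ^ r :=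
    calc A * C ^ r * C = A * C ^ r * (C ^ 2 * X + 1) := by rw [hC]
      _ = X * (A * C ^ (r + 2)) + A * C ^ r := by ring
  have hA' : A * C ^ r * C + C ^ (r + 2) = 2 * (A * C ^ r) :=
    calc A * C ^ r * C + C ^ (r + 2) = (A * C + C ^ 2) * C ^ r := by ring
      _ = 2 * (A * C ^ r) := by rw [hA]; ring
  -- `ℕ⟦X⟧` has no `IsLeftCancelAdd` instance, so `A * C ^ r` is cancelled coefficientwise.
  ext n
  have h1 := congrArg (coeff n) hC'
  have h2 := congrArg (coeff n) hA'
  simp only [map_add, two_mul] at h1 h2 ⊢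
  omega

theorem coeff_weightedCatalanSeries_mul_catalanSeries_pow_add_two_le (r n : ℕ) :
    coeff n (weightedCatalanSeries * catalanSeries ^ (r + 2)) ≤
      coeff (n + 1) (weightedCatalanSeries * catalanSeries ^ r) := by
  rw [weightedCatalanSeries_mul_catalanSeries_pow r, map_add, coeff_succ_X_mul]
  exact Nat.le_add_right _ _

theorem coeff_weightedCatalanSeries_mul_catalanSeries_pow_add_le (r j n : ℕ) :
    coeff n (weightedCatalanSeries * catalanSeries ^ (r + 2 * j)) ≤
      coeff (n + j) (weightedCatalanSeries * catalanSeries ^ r) := by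
  induction j generalizing n with
  | zero => simp
  | succ j ih =>
    calc _ ≤ coeff (n + 1) (weightedCatalanSeries * catalanSeries ^ (r + 2 * j)) :=
          coeff_weightedCatalanSeries_mul_catalanSeries_pow_add_two_le (r + 2 * j) n
      _ ≤ _ := by rw [show n + (j + 1) = n + 1 + j by omega]; exact ih (n + 1)

theorem coeff_weightedCatalanSeries_mul_catalanSeries_pow_le {m s : ℕ} (hm : 1 ≤ m)
    (hs : m ≤ s) :
    coeff (s - m) (weightedCatalanSeries * catalanSeries ^ (2 * m - 1)) ≤ s * catalan s := by
  have h := coeff_weightedCatalanSeries_mul_catalanSeries_pow_add_le 1 (m - 1) (s - m)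
  rwa [show 1 + 2 * (m - 1) = 2 * m - 1 by omega, show s - m + (m - 1) = s - 1 by omega,
    pow_one, coeff_weightedCatalanSeries_mul_catalanSeries, Nat.sub_add_cancel (by omega)] at h

end PowerSeries

/-- For `1 ≤ m ≤ s`,
`N_s^{(m)} = Σ_{u+v₁+⋯+v_{2m−1}=s−m} (2u+1)·t_u·t_{v₁}⋯t_{v_{2m−1}} ≤ 2^m · s · t_s`. -/
theorem marked_m_tuples_bound (m s : ℕ) (hm : 1 ≤ m) (hs : m ≤ s) :
    ∑ p ∈ Finset.HasAntidiagonal.antidiagonal (s - m),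
        (2 * (p.1 : ℝ) + 1) * tReal p.1 *
          ∑ l ∈ Finset.Nat.antidiagonalTuple (2 * m - 1) p.2, ∏ i, tReal (l i) ≤
      2 ^ m * (s : ℝ) * tReal s := by
  have hseries : ∑ p ∈ Finset.HasAntidiagonal.antidiagonal (s - m),
        (2 * (p.1 : ℝ) + 1) * tReal p.1 *
          ∑ l ∈ Finset.Nat.antidiagonalTuple (2 * m - 1) p.2, ∏ i, tReal (l i) =
      ((coeff (s - m) (weightedCatalanSeries * catalanSeries ^ (2 * m - 1)) : ℕ) : ℝ) := by
    simp [coeff_mul, weightedCatalanSeries, coeff_pow_eq_sum_antidiagonalTuple, tReal_eq_catalan]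
  have hbound :
      ((coeff (s - m) (weightedCatalanSeries * catalanSeries ^ (2 * m - 1)) : ℕ) : ℝ) ≤
      s * catalan s := by
    exact_mod_cast coeff_weightedCatalanSeries_mul_catalanSeries_pow_le hm hs
  rw [hseries, mul_assoc, tReal_eq_catalan]
  exact hbound.trans (le_mul_of_one_le_left (by positivity) (one_le_pow₀ one_le_two))
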